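/- For every integer n ≥ 2, the integer n - 1 divides Σ_{k=1}^{n-1} L_k · F_{n-k}. -/

import Mathlib

def L : ℕ → ℕ
  | 0 => 2
  | 1 => 1
  | (n+2) => L (n+1) + L n

/-
By the addition formula F_m L_n + L_m F_n = 2 F_{m+n}, the k-th and (n-k)-th terms of
Σ_{k=0}^n L_k F_{n-k} add up to 2 F_n, so the full sum is (n+1) F_n. The end terms are L_0 F_n = 2 F_n and
L_n F_0 = 0, so the sum over 1 ≤ k ≤ n-1 is (n-1) F_n.
-/

theorem L_add_fib (n : ℕ) : L n + Nat.fib n = 2 * Nat.fib (n + 1) := by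
  induction n using Nat.twoStepInduction with
  | zero => rfl
  | one => rfl
  | more n ih₀ ih₁ =>
    simp only [L, Nat.fib_add_two] at *
    omega

theorem fib_mul_L_add_L_mul_fib (m n : ℕ) :
    Nat.fib m * L n + L m * Nat.fib n = 2 * Nat.fib (m + n) := by
  induction n using Nat.twoStepInduction with
  | zero => simp [L, mul_comm]
  | one =>
    rw [show L 1 = 1 from rfl, Nat.fib_one, mul_one, mul_one]
    linarith [L_add_fib m]
  | more n ih₀ ih₁ =>
    rw [← add_assoc] at ih₁
    rw [L, Nat.fib_add_two, ← add_assoc, Nat.fib_add_two]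
    linarith

theorem sum_range_L_mul_fib (n : ℕ) :
    ∑ k ∈ Finset.range (n + 1), L k * Nat.fib (n - k) = (n + 1) * Nat.fib n := by
  have hpair : ∀ k ∈ Finset.range (n + 1),
      L k * Nat.fib (n - k) + L (n - k) * Nat.fib (n - (n - k)) = 2 * Nat.fib n := by
    intro k hk
    have hkn := Finset.mem_range_succ_iff.mp hk
    have := fib_mul_L_add_L_mul_fib k (n - k)
    rw [Nat.add_sub_cancel' hkn] at this
    rw [Nat.sub_sub_self hkn]
    linarith
  have hreflect : ∑ k ∈ Finset.range (n + 1), L (n - k) * Nat.fib (n - (n - k))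
      = ∑ k ∈ Finset.range (n + 1), L k * Nat.fib (n - k) := by
    simpa using Finset.sum_range_reflect (fun k => L k * Nat.fib (n - k)) (n + 1)
  have hdouble := Finset.sum_congr rfl hpair
  rw [Finset.sum_add_distrib, hreflect, Finset.sum_const, Finset.card_range,
    smul_eq_mul] at hdouble
  linarith

theorem sum_Icc_L_mul_fib (n : ℕ) :
    ∑ k ∈ Finset.Icc 1 (n - 1), L k * Nat.fib (n - k) = (n - 1) * Nat.fib n := by
  rcases n with _ | m
  · simp
  have hfull := sum_range_L_mul_fib (m + 1)
  rw [Finset.sum_range_succ, Finset.sum_range_succ'] at hfull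
  rw [Nat.add_sub_cancel, ← Finset.Ico_add_one_right_eq_Icc, Finset.sum_Ico_eq_sum_range]
  simp only [add_comm 1, Nat.add_sub_cancel, Nat.sub_zero, Nat.sub_self, Nat.fib_zero,
    mul_zero, add_zero] at hfull ⊢
  rw [show L 0 = 2 from rfl] at hfull
  linarith

theorem stmt2_general (n : ℕ) :
    (n - 1) ∣ ∑ k ∈ Finset.Icc 1 (n - 1), L k * Nat.fib (n - k) :=
  sum_Icc_L_mul_fib n ▸ dvd_mul_right _ _

theorem stmt2 (n : ℕ) (hn : 2 ≤ n) :
    (n - 1) ∣ ∑ k ∈ Finset.Icc 1 (n - 1), L k * Nat.fib (n - k) :=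
  stmt2_general n
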